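/- Fix ε > 0 and let ρ_ε = diag(1, e^{−ε})/(1 + e^{−ε}), let X = [[0,1],[1,0]] be the Pauli X matrix, and let X^{⊗N} be its N-fold Kronecker power. Then the single-battery standard deviation is Δ_{ρ_ε}(X) = 1, and for every t ∈ ℝ the standard deviation of the collective Hamiltonian 𝐇 = √N X^{⊗N} in the evolved state ρ(t) = exp(−it𝐇) ρ_ε^{⊗N} exp(it𝐇) equals √N: √(tr(𝐇² ρ(t)) − (tr(𝐇 ρ(t)))²) = √N. Hence the time-averaged standard deviation of the collective protocol equals exactly √N times that of the single-battery protocol, so the constraint (C1) is satisfied with equality and the collective speed-up √N of Proposition 1 is a genuine quantum advantage Γ_C1 = √N. -/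

import Mathlib

open scoped Matrix ComplexOrder

/-- The thermal qubit state `ρ_ε = diag(1, e^{−ε})/(1 + e^{−ε})`. -/
noncomputable def rhoTherm (ε : ℝ) : Matrix (Fin 2) (Fin 2) ℂ :=
  (1 + (Real.exp (-ε) : ℂ))⁻¹ • !![1, 0; 0, (Real.exp (-ε) : ℂ)]

/-- The Pauli `X` matrix. -/
def pauliX : Matrix (Fin 2) (Fin 2) ℂ := !![0, 1; 1, 0]

/-- The `N`-fold Kronecker (tensor) power of a `d×d` matrix, realised on the index set
`Fin N → Fin d`. -/
def kronPow {d : ℕ} (ρ : Matrix (Fin d) (Fin d) ℂ) (N : ℕ) :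
    Matrix (Fin N → Fin d) (Fin N → Fin d) ℂ :=
  fun i j => ∏ t, ρ (i t) (j t)

/-- The standard deviation `Δ_ρ H = √(tr(H²ρ) − (tr(Hρ))²)` of a Hermitian matrix `H` in
a density matrix `ρ`. -/
noncomputable def stdDevMixed {n : Type*} [Fintype n] [DecidableEq n]
    (H ρ : Matrix n n ℂ) : ℝ :=
  Real.sqrt ((H * H * ρ).trace.re - ((H * ρ).trace.re) ^ 2)


section Aux

variable {n : Type*} [Fintype n] [DecidableEq n]

/-- Conjugation by `exp(c•H)` does not change `tr(M ρ)` when `M` commutes with `H`. -/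
lemma trace_exp_conj (H ρ M : Matrix n n ℂ) (c : ℂ) (hM : Commute M H) :
    (M * (NormedSpace.exp (c • H) * ρ * NormedSpace.exp ((-c) • H))).trace
      = (M * ρ).trace := by
  set E := NormedSpace.exp (c • H) with hE
  set F := NormedSpace.exp ((-c) • H) with hF
  have hFE : F * E = 1 := by
    rw [hE, hF,
      ← Matrix.exp_add_of_commute ((-c) • H) (c • H)
        (((Commute.refl H).smul_left _).smul_right _),
      ← add_smul, neg_add_cancel, zero_smul]
    letI : SeminormedRing (Matrix n n ℂ) := Matrix.linftyOpSemiNormedRing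
    letI : NormedRing (Matrix n n ℂ) := Matrix.linftyOpNormedRing
    letI : NormedAlgebra ℂ (Matrix n n ℂ) := Matrix.linftyOpNormedAlgebra
    exact NormedSpace.exp_zero
  have hME : M * E = E * M :=
    ((hM.smul_right c).exp_right).eq
  calc (M * (E * ρ * F)).trace
      = ((M * E) * (ρ * F)).trace := by noncomm_ring
    _ = ((E * M) * (ρ * F)).trace := by rw [hME]
    _ = ((ρ * F) * (E * M)).trace := Matrix.trace_mul_comm _ _
    _ = (ρ * ((F * E) * M)).trace := by noncomm_ring
    _ = (ρ * M).trace := by rw [hFE, one_mul]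
    _ = (M * ρ).trace := Matrix.trace_mul_comm _ _

lemma stdDev_exp_conj (H ρ : Matrix n n ℂ) (t : ℝ) :
    stdDevMixed H (NormedSpace.exp ((-(t : ℂ) * Complex.I) • H) * ρ *
      NormedSpace.exp (((t : ℂ) * Complex.I) • H)) = stdDevMixed H ρ := by
  have h : ((t : ℂ) * Complex.I) = -(-(t : ℂ) * Complex.I) := by ring
  rw [h]
  unfold stdDevMixed
  rw [trace_exp_conj H ρ (H * H) _ ((Commute.refl H).mul_left (Commute.refl H)),
    trace_exp_conj H ρ H _ (Commute.refl H)]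

end Aux

lemma kronPow_trace {d N : ℕ} (A : Matrix (Fin d) (Fin d) ℂ) :
    (kronPow A N).trace = A.trace ^ N := by
  rw [Matrix.trace]
  simp only [Matrix.diag, kronPow]
  rw [← Fintype.prod_sum (fun (_ : Fin N) (m : Fin d) => A m m)]
  simp [Matrix.trace]

lemma kronPow_mul {d N : ℕ} (A B : Matrix (Fin d) (Fin d) ℂ) :
    kronPow A N * kronPow B N = kronPow (A * B) N := by
  ext i j
  rw [Matrix.mul_apply]
  simp only [kronPow, ← Finset.prod_mul_distrib, Matrix.mul_apply]
  rw [← Fintype.prod_sum (fun (t : Fin N) (m : Fin d) => A (i t) m * B m (j t))]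

lemma kronPow_one {d N : ℕ} : kronPow (1 : Matrix (Fin d) (Fin d) ℂ) N = 1 := by
  ext i j
  by_cases h : i = j
  · subst h; simp [kronPow, Matrix.one_apply]
  · obtain ⟨t, ht⟩ := Function.ne_iff.mp h
    rw [kronPow, Finset.prod_eq_zero (Finset.mem_univ t) (by simp [Matrix.one_apply, ht]),
      Matrix.one_apply_ne h]

lemma pauliX_sq : pauliX * pauliX = 1 := by
  rw [pauliX, Matrix.mul_fin_two, Matrix.one_fin_two]
  norm_num

lemma rhoTherm_trace (ε : ℝ) : (rhoTherm ε).trace = 1 := by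
  have hne : (1 : ℂ) + (Real.exp (-ε) : ℂ) ≠ 0 := by
    have : ((1 + Real.exp (-ε) : ℝ) : ℂ) ≠ 0 := by
      rw [Complex.ofReal_ne_zero]
      positivity
    simpa using this
  rw [rhoTherm, Matrix.trace_smul, Matrix.trace_fin_two_of, smul_eq_mul,
    inv_mul_cancel₀ hne]

lemma pauliX_rhoTherm_trace (ε : ℝ) : (pauliX * rhoTherm ε).trace = 0 := by
  rw [rhoTherm, pauliX, Matrix.mul_smul, Matrix.trace_smul, Matrix.mul_fin_two]
  norm_num [Matrix.trace_fin_two_of]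

/-- **Constraint (C1) is satisfied with equality in Proposition 1.**
For `ε > 0`, the single-battery standard deviation is `Δ_{ρ_ε}(X) = 1`; the standard
deviation of the collective Hamiltonian `𝐇 = √N X^{⊗N}` in the evolved state
`ρ(t) = exp(−it𝐇) ρ_ε^{⊗N} exp(it𝐇)` equals `√N` for every `t`; and hence for every
`T > 0` the time-averaged standard deviation of the collective protocol equals exactly
`√N` times the time-averaged standard deviation of the single-battery protocol
(with evolved state `exp(−itX) ρ_ε exp(itX)`), so the collective speed-up `√N` of
Proposition 1 is a genuine quantum advantage `Γ_C1 = √N`. -/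
theorem constraint_C1_equality (ε : ℝ) (hε : 0 < ε) (N : ℕ) (hN : 0 < N)
    (Hc : Matrix (Fin N → Fin 2) (Fin N → Fin 2) ℂ)
    (hHc : Hc = ((Real.sqrt N : ℝ) : ℂ) • kronPow pauliX N)
    (ρc : ℝ → Matrix (Fin N → Fin 2) (Fin N → Fin 2) ℂ)
    (hρc : ∀ t : ℝ, ρc t =
      NormedSpace.exp ((-(t : ℂ) * Complex.I) • Hc) * kronPow (rhoTherm ε) N *
        NormedSpace.exp (((t : ℂ) * Complex.I) • Hc))
    (ρ₁ : ℝ → Matrix (Fin 2) (Fin 2) ℂ)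
    (hρ₁ : ∀ t : ℝ, ρ₁ t =
      NormedSpace.exp ((-(t : ℂ) * Complex.I) • pauliX) * rhoTherm ε *
        NormedSpace.exp (((t : ℂ) * Complex.I) • pauliX)) :
    stdDevMixed pauliX (rhoTherm ε) = 1 ∧
    (∀ t : ℝ, stdDevMixed Hc (ρc t) = Real.sqrt N) ∧
    (∀ T : ℝ, 0 < T →
      (∫ t in (0:ℝ)..T, stdDevMixed Hc (ρc t)) / T =
        Real.sqrt N * ((∫ t in (0:ℝ)..T, stdDevMixed pauliX (ρ₁ t)) / T)) := by
  have h1 : stdDevMixed pauliX (rhoTherm ε) = 1 := by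
    unfold stdDevMixed
    rw [pauliX_sq, one_mul, rhoTherm_trace, pauliX_rhoTherm_trace]
    norm_num
  have hTrρN : (kronPow (rhoTherm ε) N).trace = 1 := by
    rw [kronPow_trace, rhoTherm_trace, one_pow]
  have h2 : ∀ t : ℝ, stdDevMixed Hc (ρc t) = Real.sqrt N := by
    intro t
    rw [hρc t, stdDev_exp_conj]
    unfold stdDevMixed
    have hc2 : ((Real.sqrt N : ℝ) : ℂ) * ((Real.sqrt N : ℝ) : ℂ) = (N : ℂ) := by
      rw [← Complex.ofReal_mul, Real.mul_self_sqrt (Nat.cast_nonneg N)]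
      norm_cast
    have hsq : Hc * Hc = (N : ℂ) • (1 : Matrix (Fin N → Fin 2) (Fin N → Fin 2) ℂ) := by
      rw [hHc, Matrix.smul_mul, Matrix.mul_smul, smul_smul, kronPow_mul, pauliX_sq,
        kronPow_one, hc2]
    have hHH : (Hc * Hc * kronPow (rhoTherm ε) N).trace = (N : ℂ) := by
      rw [hsq, Matrix.smul_mul, one_mul, Matrix.trace_smul, hTrρN, smul_eq_mul, mul_one]
    have hH1 : (Hc * kronPow (rhoTherm ε) N).trace = 0 := by
      rw [hHc, Matrix.smul_mul, Matrix.trace_smul, kronPow_mul, kronPow_trace,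
        pauliX_rhoTherm_trace, zero_pow hN.ne', smul_zero]
    rw [hHH, hH1]
    simp [Complex.natCast_re]
  refine ⟨h1, h2, fun T hT => ?_⟩
  have h1t : ∀ t : ℝ, stdDevMixed pauliX (ρ₁ t) = 1 := fun t => by
    rw [hρ₁ t, stdDev_exp_conj]; exact h1
  simp only [h2, h1t, intervalIntegral.integral_const, smul_eq_mul, sub_zero, mul_one]
  field_simp
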